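/- arXiv:2307.06382 — 2 statements merged into one kernel-verified Lean document; each statement's English description precedes it below -/
import Mathlib

section
/- Let Π and Π' be ground normal programs, and let X be a nonempty set of atoms each of whose predicates occurs in Π but not in Π'. If ⟨I, I ∪ X⟩ is an HT-model of Π (with I disjoint from X), then I ∪ X is not a stable model of Π ∪ Π'. -/
/-- A ground normal rule: head atom, positive body atoms, negative body atoms. -/
structure Rule (α : Type*) where
  head : α
  pos : Set α
  neg : Set α

/-- Classical satisfaction of a rule by an interpretation. -/
def satRule {α : Type*} (I : Set α) (r : Rule α) : Prop :=
  (r.pos ⊆ I ∧ Disjoint r.neg I) → r.head ∈ I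

/-- Classical satisfaction of a program. -/
def satProg {α : Type*} (I : Set α) (P : Set (Rule α)) : Prop :=
  ∀ r ∈ P, satRule I r

/-- The (Gelfond–Lifschitz) reduct of a program w.r.t. an interpretation. -/
def reduct {α : Type*} (P : Set (Rule α)) (I : Set α) : Set (Rule α) :=
  {r' | ∃ r ∈ P, Disjoint r.neg I ∧ r' = ⟨r.head, r.pos, ∅⟩}

/-- ⟨H,T⟩ is a here-and-there model of P. -/
def isHT {α : Type*} (P : Set (Rule α)) (H T : Set α) : Prop :=
  H ⊆ T ∧ satProg T P ∧ satProg H (reduct P T)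

/-- I is a stable model of P. -/
def stable {α : Type*} (P : Set (Rule α)) (I : Set α) : Prop :=
  satProg I P ∧ ∀ J, J ⊂ I → ¬ satProg J (reduct P I)

/-- Atom a occurs in rule r. -/
def occursIn {α : Type*} (a : α) (r : Rule α) : Prop :=
  a = r.head ∨ a ∈ r.pos ∨ a ∈ r.neg

theorem local_atoms_unstable {α : Type*} (P P' : Set (Rule α)) (I X : Set α)
    (hne : X.Nonempty) (hdisj : Disjoint I X)
    (hloc : ∀ a ∈ X, ∀ r ∈ P', ¬ occursIn a r)
    (hHT : isHT P I (I ∪ X)) :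
    ¬ stable (P ∪ P') (I ∪ X) := by
  rintro ⟨hsat, hmin⟩
  obtain ⟨hsub, hT, hH⟩ := hHT
  refine hmin I ⟨Set.subset_union_left, ?_⟩ ?_
  · intro h
    obtain ⟨x, hx⟩ := hne
    exact hdisj.ne_of_mem (h (Set.mem_union_right I hx)) hx rfl
  · rintro r' ⟨r, hr, hneg, rfl⟩
    rcases hr with hr | hr
    · exact hH _ ⟨r, hr, hneg, rfl⟩
    · intro ⟨hpos, _⟩
      have hhead : r.head ∈ I ∪ X :=
        hsat r (Or.inr hr) ⟨hpos.trans Set.subset_union_left, hneg⟩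
      rcases hhead with h | h
      · exact h
      · exact absurd (Or.inl rfl) (hloc _ h r hr)
end

section
/- Let Π be a ground normal program and Π' a program sharing no atoms from a set L of 'local' atoms, where all atoms of Π′ avoid L. Let I and I' be disjoint sets of atoms. Suppose that for every set T of atoms with I ⊆ T and T ∩ I' = ∅, there exists an HT-model ⟨H,T⟩ of Π with H ⊊ T such that every atom of T \ H is in L (hence does not occur in Π'). Then no stable model T of Π ∪ Π' satisfies I ⊆ T and T ∩ I' = ∅. -/
theorem local_atoms_exclude_stable {α : Type*} (P P' : Set (Rule α)) (L I I' : Set α)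
    (hloc : ∀ r ∈ P', ∀ a : α, occursIn a r → a ∉ L)
    (hdisj : Disjoint I I')
    (hyp : ∀ T : Set α, I ⊆ T → Disjoint T I' →
      ∃ H : Set α, H ⊂ T ∧ isHT P H T ∧ T \ H ⊆ L) :
    ¬ ∃ T : Set α, stable (P ∪ P') T ∧ I ⊆ T ∧ Disjoint T I' := by
  rintro ⟨T, ⟨hsat, hmin⟩, hIT, hTI'⟩
  obtain ⟨H, hHT, ⟨hsub, hTsat, hHsat⟩, hdiff⟩ := hyp T hIT hTI'
  refine hmin H hHT ?_
  rintro r' ⟨r, hr, hneg, rfl⟩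
  rcases hr with hr | hr
  · exact hHsat _ ⟨r, hr, hneg, rfl⟩
  · rintro ⟨hpos, -⟩
    have hhead : r.head ∈ T := hsat r (Or.inr hr) ⟨fun a ha => hsub (hpos ha), hneg⟩
    by_contra hh
    exact hloc r hr r.head (Or.inl rfl) (hdiff ⟨hhead, hh⟩)
end
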